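/- Let c ∈ ℂ, r > 0, and let f : ℂ → ℂ be complex-differentiable on an open set containing the closed disk {z : |z - c| ≤ r}. Let x_0, …, x_n be distinct points in the open disk {z : |z - c| < r}, let l(s) = ∏_{i=0}^n (s - x_i), and let P_n be the Lagrange interpolating polynomial of f at these nodes, P_n(x) = ∑_{i=0}^n f(x_i) ∏_{j≠i} (x - x_j)/(x_i - x_j). Then for every x in the open disk {z : |z - c| < r}, |f(x) - P_n(x)| ≤ (r/(2π))·(∫_0^{2π} |f(c + re^{iθ})|/|c + re^{iθ} - x| dθ)·|l(x)|·sup_{θ∈[0,2π]} (1/|l(c + re^{iθ})|). -/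

import Mathlib

/-!
For `z` off the nodes, `t ↦ (l z - l t) / (z - t)` is a polynomial of degree `n`, hence equal to
its own interpolant; equivalently, interpolating `t ↦ 1 / (z - t)` at the nodes leaves the error
`l x / (l z (z - x))` at `x`. Integrating this identity against `f z / (2πi)` over the circle and
applying Cauchy's formula at `x` and at every node gives Hermite's formula
`f x - P x = (2πi)⁻¹ ∮ l x f z / (l z (z - x)) dz`. The bound follows by estimating the integrand,
with `1 / |l z|` bounded by its supremum over the circle.
-/

open Finset

namespace Lagrange

open Polynomial

variable {F ι : Type*} [Field F]

noncomputable def hermiteKernel (s : Finset ι) (v : ι → F) (x z : F) : F :=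
  (nodal s v).eval x / ((nodal s v).eval z * (z - x))

variable [DecidableEq ι] {s : Finset ι} {v : ι → F}

theorem eval_basis (i : ι) (x : F) :
    (Lagrange.basis s v i).eval x = ∏ j ∈ s.erase i, (x - v j) / (v i - v j) := by
  simp only [Lagrange.basis, basisDivisor, eval_prod, eval_mul, eval_C, eval_sub, eval_X,
    div_eq_inv_mul]

theorem eval_interpolate (r : ι → F) (x : F) :
    (interpolate s v r).eval x = ∑ i ∈ s, r i * (Lagrange.basis s v i).eval x := by
  simp only [interpolate_apply, eval_finsetSum, eval_mul, eval_C]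

theorem sub_inv_sub_eval_interpolate_sub_inv (hvs : Set.InjOn v s) {x z : F}
    (hz : ∀ i ∈ s, z ≠ v i) (hzx : z ≠ x) :
    (z - x)⁻¹ - (interpolate s v fun i => (z - v i)⁻¹).eval x = hermiteKernel s v x z := by
  set l := nodal s v
  set p := l - C (l.eval z)
  -- `q t = (l t - l z) / (t - z)`
  set q := p /ₘ (X - C z)
  have hq (t : F) : (t - z) * q.eval t = l.eval t - l.eval z := by
    have hroot : (X - C z) * q = p := mul_divByMonic_eq_iff_isRoot.mpr (by simp [p])
    simpa [p] using congrArg (eval t) hroot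
  have hdeg : q.degree < #s := by
    by_cases hp : p = 0
    · simp [q, hp]
    have hp_deg : p.degree ≤ #s :=
      (degree_sub_le _ _).trans (max_le degree_nodal.le (degree_C_le.trans (by simp)))
    exact (degree_divByMonic_lt p _ hp (by simp)).trans_le hp_deg
  have hlz : l.eval z ≠ 0 := eval_nodal_not_at_node hz
  have hinterp : q = l.eval z • interpolate s v fun i => (z - v i)⁻¹ := by
    rw [← map_smul]
    refine eq_interpolate_of_eval_eq _ hvs hdeg fun i hi => ?_
    have hqi := hq (v i)
    rw [eval_nodal_at_node hi] at hqi
    simp only [Pi.smul_apply, smul_eq_mul]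
    field_simp [sub_ne_zero.mpr (hz i hi)]
    linear_combination -hqi
  have hqx := hq x
  rw [hinterp, eval_smul, smul_eq_mul] at hqx
  generalize (interpolate s v fun i => (z - v i)⁻¹).eval x = y at hqx ⊢
  have hzx' : z - x ≠ 0 := sub_ne_zero.mpr hzx
  rw [hermiteKernel, eq_div_iff (mul_ne_zero hlz hzx')]
  linear_combination hqx + l.eval z * inv_mul_cancel₀ hzx'

end Lagrange

theorem circleIntegral.norm_integral_le_abs_mul_integral_norm {E : Type*} [NormedAddCommGroup E]
    [NormedSpace ℂ E] (f : ℂ → E) (c : ℂ) (R : ℝ) :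
    ‖∮ z in C(c, R), f z‖ ≤ |R| * ∫ θ in (0 : ℝ)..2 * Real.pi, ‖f (circleMap c R θ)‖ :=
  calc ‖∮ z in C(c, R), f z‖
      ≤ ∫ θ in (0 : ℝ)..2 * Real.pi, ‖deriv (circleMap c R) θ • f (circleMap c R θ)‖ :=
        intervalIntegral.norm_integral_le_integral_norm Real.two_pi_pos.le
    _ = _ := by simp [norm_smul, intervalIntegral.integral_const_mul]

theorem intervalIntegral.integral_mono_on_of_nonneg {f g : ℝ → ℝ} {a b : ℝ} (hab : a ≤ b)
    (hg : IntervalIntegrable g MeasureTheory.volume a b) (hf : ∀ t ∈ Set.Ioc a b, 0 ≤ f t)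
    (h : ∀ t ∈ Set.Ioc a b, f t ≤ g t) : ∫ t in a..b, f t ≤ ∫ t in a..b, g t := by
  rw [integral_of_le hab, integral_of_le hab]
  exact MeasureTheory.integral_mono_of_nonneg
    (MeasureTheory.ae_restrict_of_forall_mem measurableSet_Ioc hf) hg.1
    (MeasureTheory.ae_restrict_of_forall_mem measurableSet_Ioc h)

theorem IsCompact.le_ciSup_of_continuousOn {α : Type*} [TopologicalSpace α] {K : Set α}
    (hK : IsCompact K) {g : α → ℝ} (hg : ContinuousOn g K) {a : α} (ha : a ∈ K) :
    g a ≤ ⨆ t : K, g t :=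
  le_ciSup (f := fun t : K => g t) (by rw [← Set.image_eq_range]; exact hK.bddAbove_image hg)
    ⟨a, ha⟩

section Hermite

open Lagrange Polynomial Metric

variable {ι : Type*} {s : Finset ι} {v : ι → ℂ} {c : ℂ} {r : ℝ}

theorem inv_norm_eval_nodal_circleMap_le_iSup (hv : ∀ i ∈ s, v i ∈ ball c r) {θ : ℝ}
    (hθ : θ ∈ Set.Icc 0 (2 * Real.pi)) :
    1 / ‖(nodal s v).eval (circleMap c r θ)‖
      ≤ ⨆ t : Set.Icc (0 : ℝ) (2 * Real.pi), 1 / ‖(nodal s v).eval (circleMap c r t)‖ := by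
  refine isCompact_Icc.le_ciSup_of_continuousOn
    (g := fun t => 1 / ‖(nodal s v).eval (circleMap c r t)‖) (Continuous.continuousOn ?_) hθ
  exact continuous_const.div ((Polynomial.continuous _).comp (continuous_circleMap c r)).norm
    fun t => norm_ne_zero_iff.mpr <|
      eval_nodal_not_at_node fun i hi => circleMap_ne_mem_ball (hv i hi) t

theorem norm_circleIntegral_hermiteKernel_smul_le {f : ℂ → ℂ} (hf : ContinuousOn f (sphere c r))
    (hv : ∀ i ∈ s, v i ∈ ball c r) {x : ℂ} (hx : x ∈ ball c r) :
    ‖∮ z in C(c, r), hermiteKernel s v x z • f z‖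
      ≤ r * (∫ θ in (0 : ℝ)..2 * Real.pi, ‖f (circleMap c r θ)‖ / ‖circleMap c r θ - x‖)
        * ‖(nodal s v).eval x‖
        * ⨆ θ : Set.Icc (0 : ℝ) (2 * Real.pi), 1 / ‖(nodal s v).eval (circleMap c r θ)‖ := by
  have hr : 0 < r := pos_of_mem_ball hx
  set M := ⨆ θ : Set.Icc (0 : ℝ) (2 * Real.pi), 1 / ‖(nodal s v).eval (circleMap c r θ)‖
  set q := fun θ => ‖f (circleMap c r θ)‖ / ‖circleMap c r θ - x‖
  have hq : IntervalIntegrable q MeasureTheory.volume 0 (2 * Real.pi) := by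
    refine Continuous.intervalIntegrable ?_ _ _
    refine (hf.comp_continuous (continuous_circleMap c r) (circleMap_mem_sphere c hr.le)).norm.div
      ((continuous_circleMap c r).sub continuous_const).norm fun θ => ?_
    exact norm_ne_zero_iff.mpr (sub_ne_zero.mpr (circleMap_ne_mem_ball hx θ))
  have hbound : ∀ θ ∈ Set.Ioc 0 (2 * Real.pi),
      ‖hermiteKernel s v x (circleMap c r θ) • f (circleMap c r θ)‖
        ≤ ‖(nodal s v).eval x‖ * M * q θ := by
    intro θ hθ
    calc _ = ‖(nodal s v).eval x‖ * (1 / ‖(nodal s v).eval (circleMap c r θ)‖) * q θ := by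
          rw [hermiteKernel, norm_smul, norm_div, norm_mul]; ring
      _ ≤ _ := by
          gcongr
          exact inv_norm_eval_nodal_circleMap_le_iSup hv (Set.Ioc_subset_Icc_self hθ)
  calc ‖∮ z in C(c, r), hermiteKernel s v x z • f z‖
      ≤ r * ∫ θ in (0 : ℝ)..2 * Real.pi,
          ‖hermiteKernel s v x (circleMap c r θ) • f (circleMap c r θ)‖ := by
        simpa [abs_of_pos hr] using circleIntegral.norm_integral_le_abs_mul_integral_norm
          (fun z => hermiteKernel s v x z • f z) c r
    _ ≤ r * ∫ θ in (0 : ℝ)..2 * Real.pi, ‖(nodal s v).eval x‖ * M * q θ := by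
        gcongr
        exact intervalIntegral.integral_mono_on_of_nonneg Real.two_pi_pos.le (hq.const_mul _)
          (fun _ _ => norm_nonneg _) hbound
    _ = _ := by rw [intervalIntegral.integral_const_mul]; ring

variable [DecidableEq ι]

theorem DiffContOnCl.circleIntegral_hermiteKernel_smul {f : ℂ → ℂ}
    (hf : DiffContOnCl ℂ f (ball c r)) (hvs : Set.InjOn v s) (hv : ∀ i ∈ s, v i ∈ ball c r)
    {x : ℂ} (hx : x ∈ ball c r) :
    (∮ z in C(c, r), hermiteKernel s v x z • f z)
      = (2 * Real.pi * Complex.I : ℂ) • (f x - (interpolate s v (f ∘ v)).eval x) := by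
  have hr : 0 < r := pos_of_mem_ball hx
  have hne {z w : ℂ} (hz : z ∈ sphere c r) (hw : w ∈ ball c r) : z ≠ w :=
    sphere_disjoint_ball.ne_of_mem hz hw
  have hint_sub_inv {w : ℂ} (hw : w ∈ ball c r) :
      CircleIntegrable (fun z => (z - w)⁻¹ • f z) c r := by
    have hfc : ContinuousOn f (sphere c r) := hf.continuousOn.mono <| by
      rw [closure_ball c hr.ne']; exact sphere_subset_closedBall
    exact ContinuousOn.circleIntegrable hr.le <| ((continuousOn_id.sub continuousOn_const).inv₀
      fun z hz => sub_ne_zero.mpr (hne hz hw)).smul hfc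
  have hkernel : Set.EqOn (fun z => hermiteKernel s v x z • f z)
      (fun z => (z - x)⁻¹ • f z - ∑ i ∈ s, (Lagrange.basis s v i).eval x • ((z - v i)⁻¹ • f z))
      (sphere c r) := fun z hz => by
    simp only [← sub_inv_sub_eval_interpolate_sub_inv hvs (fun i hi => hne hz (hv i hi))
      (hne hz hx), eval_interpolate, smul_eq_mul, sub_mul, Finset.sum_mul]
    exact congrArg _ (sum_congr rfl fun _ _ => by ring)
  have hint_term : ∀ i ∈ s, CircleIntegrable
      (fun z => (Lagrange.basis s v i).eval x • ((z - v i)⁻¹ • f z)) c r :=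
    fun i hi => (hint_sub_inv (hv i hi)).const_smul
  rw [circleIntegral.integral_congr hr.le hkernel, circleIntegral.integral_sub (hint_sub_inv hx)
    (.fun_sum _ hint_term), circleIntegral.integral_fun_sum hint_term]
  rw [sum_congr rfl fun i hi => by
    rw [circleIntegral.integral_smul, hf.circleIntegral_sub_inv_smul (hv i hi)]]
  rw [hf.circleIntegral_sub_inv_smul hx, eval_interpolate, smul_sub, smul_sum]
  simp only [smul_eq_mul, Function.comp_apply]
  exact congrArg _ (sum_congr rfl fun _ _ => by ring)

end Hermite

theorem polynomial_interpolation_error_bound_general (c : ℂ) (r : ℝ) (f : ℂ → ℂ)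
    (U : Set ℂ) (hUsub : Metric.closedBall c r ⊆ U)
    (hf : DifferentiableOn ℂ f U)
    (n : ℕ) (x : Fin (n + 1) → ℂ) (hx : Function.Injective x)
    (hxball : ∀ i, x i ∈ Metric.ball c r)
    (l : ℂ → ℂ) (hl : ∀ s, l s = ∏ i, (s - x i))
    (P : ℂ → ℂ)
    (hP : ∀ X, P X = ∑ i, f (x i) * ∏ j ∈ univ.erase i, (X - x j) / (x i - x j))
    (X : ℂ) (hX : X ∈ Metric.ball c r) :
    ‖f X - P X‖ ≤ (r / (2 * Real.pi)) *
      (∫ θ in (0:ℝ)..(2 * Real.pi),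
        ‖f (c + (r : ℂ) * Complex.exp ((θ : ℂ) * Complex.I))‖ /
          ‖c + (r : ℂ) * Complex.exp ((θ : ℂ) * Complex.I) - X‖) *
      ‖l X‖ *
      (⨆ θ : Set.Icc (0:ℝ) (2 * Real.pi),
        1 / ‖l (c + (r : ℂ) * Complex.exp (((θ : ℝ) : ℂ) * Complex.I))‖) := by
  obtain rfl : l = fun s => (Lagrange.nodal univ x).eval s :=
    funext fun s => by rw [hl, Lagrange.eval_nodal]
  have hPX : P X = (Lagrange.interpolate univ x (f ∘ x)).eval X := by
    simp only [hP, Lagrange.eval_interpolate, Lagrange.eval_basis, Function.comp_apply]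
  have hcircle (θ : ℝ) : c + r * Complex.exp (θ * Complex.I) = circleMap c r θ := rfl
  have hfc : ContinuousOn f (Metric.sphere c r) :=
    hf.continuousOn.mono (Metric.sphere_subset_closedBall.trans hUsub)
  have hHermite := (hf.diffContOnCl_ball hUsub).circleIntegral_hermiteKernel_smul
    (s := univ) hx.injOn (fun i _ => hxball i) hX
  have h2pi : ‖(2 * Real.pi * Complex.I : ℂ)‖ = 2 * Real.pi := by simp [abs_of_pos Real.pi_pos]
  simp only [hcircle]
  calc ‖f X - P X‖
      = (2 * Real.pi)⁻¹ * ‖∮ z in C(c, r), Lagrange.hermiteKernel univ x X z • f z‖ := by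
        rw [hHermite, hPX, norm_smul, h2pi, inv_mul_cancel_left₀ Real.two_pi_pos.ne']
    _ ≤ _ := by
        rw [div_eq_inv_mul, mul_assoc, mul_assoc, mul_assoc]
        gcongr
        simpa only [mul_assoc] using
          norm_circleIntegral_hermiteKernel_smul_le hfc (fun i _ => hxball i) hX

/-- Pointwise error bound for polynomial interpolation deduced from the Hermite integral
formula over a circular contour of center `c` and radius `r` (inequality (1b)). -/
theorem polynomial_interpolation_error_bound (c : ℂ) (r : ℝ) (hr : 0 < r) (f : ℂ → ℂ)
    (U : Set ℂ) (hUopen : IsOpen U) (hUsub : Metric.closedBall c r ⊆ U)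
    (hf : DifferentiableOn ℂ f U)
    (n : ℕ) (x : Fin (n + 1) → ℂ) (hx : Function.Injective x)
    (hxball : ∀ i, x i ∈ Metric.ball c r)
    (l : ℂ → ℂ) (hl : ∀ s, l s = ∏ i, (s - x i))
    (P : ℂ → ℂ)
    (hP : ∀ X, P X = ∑ i, f (x i) * ∏ j ∈ univ.erase i, (X - x j) / (x i - x j))
    (X : ℂ) (hX : X ∈ Metric.ball c r) :
    ‖f X - P X‖ ≤ (r / (2 * Real.pi)) *
      (∫ θ in (0:ℝ)..(2 * Real.pi),
        ‖f (c + (r : ℂ) * Complex.exp ((θ : ℂ) * Complex.I))‖ /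
          ‖c + (r : ℂ) * Complex.exp ((θ : ℂ) * Complex.I) - X‖) *
      ‖l X‖ *
      (⨆ θ : Set.Icc (0:ℝ) (2 * Real.pi),
        1 / ‖l (c + (r : ℂ) * Complex.exp (((θ : ℝ) : ℂ) * Complex.I))‖) :=
  polynomial_interpolation_error_bound_general c r f U hUsub hf n x hx hxball l hl P hP X hX
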